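/- arXiv:2307.10449 — 2 statements merged into one kernel-verified Lean document; each statement's English description precedes it below -/
import Mathlib

section
/- Let f_n = Σ_{j=1}^k (1/j) f_{n,j} where each f_{n,j} ∈ l(T_n) takes values in [0,1], is supported on a set S_j ⊆ T_n, and Σ_{j=1}^{k-1} (1/j) f_{n,j} is constant on Γ_1(S_k). Suppose further that for each k' ≤ k, Σ_{j=1}^{k'-1}(1/j) f_{n,j} is constant on Γ_1(S_{k'}) and f_{n,j} for j > k' vanish outside sets disjoint in the appropriate nested fashion so the telescoping applies at each stage. Then E_p^n(f_n) = Σ_{j=1}^k j^{-p} E_p^n(f_{n,j}). -/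
open Classical in
noncomputable def energyF {T X : Type*} (p : ℝ) (K : T → Set X) (A : Finset T)
    (f : T → ℝ) : ℝ :=
  (1 / 2) * ∑ w ∈ A, ∑ v ∈ A, if (K w ∩ K v).Nonempty then |f w - f v| ^ p else 0

def Gamma1 {T X : Type*} (K : T → Set X) (B : Set T) : Set T :=
  B ∪ {v | ∃ w ∈ B, (K v ∩ K w).Nonempty}

open Finset

section

variable {T X : Type*} {p : ℝ} {K : T → Set X}

lemma mem_Gamma1_of_inter_nonempty {S : Set T} {w v : T} (hv : v ∈ S)
    (hwv : (K w ∩ K v).Nonempty) : w ∈ Gamma1 K S :=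
  Or.inr ⟨v, hv, hwv⟩

lemma energyF_zero (hp : p ≠ 0) (A : Finset T) : energyF p K A (fun _ => 0) = 0 := by
  simp [energyF, Real.zero_rpow hp]

lemma energyF_eq_add_of_edge {A : Finset T} {h g f : T → ℝ}
    (hedge : ∀ w v, (K w ∩ K v).Nonempty →
      |h w - h v| ^ p = |g w - g v| ^ p + |f w - f v| ^ p) :
    energyF p K A h = energyF p K A g + energyF p K A f := by
  simp only [energyF, ← mul_add, ← sum_add_distrib]
  congr 1
  refine sum_congr rfl fun w _ => sum_congr rfl fun v _ => ?_
  split_ifs with hwv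
  · exact hedge w v hwv
  · simp

lemma energyF_const_mul (A : Finset T) (c : ℝ) (f : T → ℝ) :
    energyF p K A (fun w => c * f w) = |c| ^ p * energyF p K A f := by
  simp only [energyF, mul_sum, ← mul_sub, abs_mul, Real.mul_rpow (abs_nonneg c) (abs_nonneg _),
    mul_ite, mul_zero, mul_left_comm (|c| ^ p)]

/-- On an edge meeting `S` both ends lie in `Γ₁(S)`, where `g` is constant; on any other
edge `f` vanishes at both ends. -/
lemma abs_add_sub_rpow_of_inter_nonempty (hp : p ≠ 0) {g f : T → ℝ} {S : Set T}
    (hf : ∀ w, w ∉ S → f w = 0) (hg : ∃ c, ∀ w ∈ Gamma1 K S, g w = c) {w v : T}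
    (hwv : (K w ∩ K v).Nonempty) :
    |g w + f w - (g v + f v)| ^ p = |g w - g v| ^ p + |f w - f v| ^ p := by
  obtain ⟨c, hc⟩ := hg
  by_cases hS : w ∈ S ∨ v ∈ S
  · have hw : w ∈ Gamma1 K S := hS.elim Or.inl (mem_Gamma1_of_inter_nonempty · hwv)
    have hv : v ∈ Gamma1 K S :=
      hS.elim (mem_Gamma1_of_inter_nonempty · (Set.inter_comm (K w) (K v) ▸ hwv)) Or.inl
    rw [hc w hw, hc v hv, add_sub_add_left_eq_sub, sub_self, abs_zero, Real.zero_rpow hp,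
      zero_add]
  · push Not at hS
    simp [hf w hS.1, hf v hS.2, Real.zero_rpow hp]

lemma energyF_add_of_const_on_Gamma1 (hp : p ≠ 0) (A : Finset T) {g f : T → ℝ} {S : Set T}
    (hf : ∀ w, w ∉ S → f w = 0) (hg : ∃ c, ∀ w ∈ Gamma1 K S, g w = c) :
    energyF p K A (fun w => g w + f w) = energyF p K A g + energyF p K A f :=
  energyF_eq_add_of_edge fun _ _ => abs_add_sub_rpow_of_inter_nonempty hp hf hg

theorem energyF_sum_Icc_of_const_on_Gamma1 (hp : p ≠ 0) (A : Finset T) (fs : ℕ → T → ℝ)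
    (S : ℕ → Set T) (k : ℕ) (hsupp : ∀ j ∈ Icc 1 k, ∀ w, w ∉ S j → fs j w = 0)
    (hconst : ∀ k' ∈ Icc 1 k, ∃ c : ℝ, ∀ w ∈ Gamma1 K (S k'),
      ∑ j ∈ Icc 1 (k' - 1), fs j w = c) :
    energyF p K A (fun w => ∑ j ∈ Icc 1 k, fs j w) = ∑ j ∈ Icc 1 k, energyF p K A (fs j) := by
  induction k with
  | zero => simpa using energyF_zero hp A
  | succ k ih =>
    have hlast : k + 1 ∈ Icc 1 (k + 1) := mem_Icc.mpr ⟨k.succ_pos, le_rfl⟩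
    have hsub : Icc 1 k ⊆ Icc 1 (k + 1) := Icc_subset_Icc_right k.le_succ
    simp only [sum_Icc_succ_top (Nat.succ_pos k)]
    rw [energyF_add_of_const_on_Gamma1 hp A (hsupp _ hlast) (by simpa using hconst _ hlast),
      ih (fun j hj => hsupp j (hsub hj)) (fun k' hk' => hconst k' (hsub hk'))]

end

theorem energy_telescoping_general {T X : Type*} (p : ℝ) (hp : 1 ≤ p) (K : T → Set X)
    (A : Finset T) (k : ℕ) (fs : ℕ → T → ℝ) (S : ℕ → Set T)
    (hsupp : ∀ j ∈ Finset.Icc 1 k, ∀ w, w ∉ S j → fs j w = 0)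
    (hconst : ∀ k' ∈ Finset.Icc 1 k, ∃ c : ℝ, ∀ w ∈ Gamma1 K (S k'),
      ∑ j ∈ Finset.Icc 1 (k' - 1), (j : ℝ)⁻¹ * fs j w = c) :
    energyF p K A (fun w => ∑ j ∈ Finset.Icc 1 k, (j : ℝ)⁻¹ * fs j w)
      = ∑ j ∈ Finset.Icc 1 k, (j : ℝ) ^ (-p) * energyF p K A (fs j) := by
  have hsupp_scaled : ∀ j ∈ Icc 1 k, ∀ w, w ∉ S j → (j : ℝ)⁻¹ * fs j w = 0 := fun j hj w hw => by
    rw [hsupp j hj w hw, mul_zero]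
  rw [energyF_sum_Icc_of_const_on_Gamma1 (by linarith) A (fun j w => (j : ℝ)⁻¹ * fs j w) S k
    hsupp_scaled hconst]
  refine sum_congr rfl fun j _ => ?_
  rw [energyF_const_mul, abs_inv, Nat.abs_cast, Real.inv_rpow (Nat.cast_nonneg j),
    Real.rpow_neg (Nat.cast_nonneg j)]

/-- energy decomposition for a nested telescoping sum of cutoff functions:
if each `f_{n,j}` takes values in `[0,1]`, is supported on `S j`, and for each stage
`k' ≤ k` the partial sum `Σ_{j=1}^{k'-1} (1/j) f_{n,j}` is constant on `Γ₁(S k')`, then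
`E_p^n(Σ_{j=1}^k (1/j) f_{n,j}) = Σ_{j=1}^k j^{-p} E_p^n(f_{n,j})`. -/
theorem energy_telescoping {T X : Type*} (p : ℝ) (hp : 1 ≤ p) (K : T → Set X)
    (A : Finset T) (k : ℕ) (hk : 1 ≤ k) (fs : ℕ → T → ℝ) (S : ℕ → Set T)
    (hrange : ∀ j ∈ Finset.Icc 1 k, ∀ w, 0 ≤ fs j w ∧ fs j w ≤ 1)
    (hsupp : ∀ j ∈ Finset.Icc 1 k, ∀ w, w ∉ S j → fs j w = 0)
    (hconst : ∀ k' ∈ Finset.Icc 1 k, ∃ c : ℝ, ∀ w ∈ Gamma1 K (S k'),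
      ∑ j ∈ Finset.Icc 1 (k' - 1), (j : ℝ)⁻¹ * fs j w = c) :
    energyF p K A (fun w => ∑ j ∈ Finset.Icc 1 k, (j : ℝ)⁻¹ * fs j w)
      = ∑ j ∈ Finset.Icc 1 k, (j : ℝ) ^ (-p) * energyF p K A (fs j) :=
  energy_telescoping_general p hp K A k fs S hsupp hconst
end

section
/- Suppose σ ≤ 1 and constants C₁, C₂ < ∞ satisfy: for every n there exists ĝ_n ∈ L^p(K,μ) with sup_n ‖ĝ_n‖_{L^p} < ∞, σ^m E_p^m(P_m ĝ_n) ≤ C₂ for all 1 ≤ m ≤ n, and ĝ_n ≥ Σ_{j=1}^k 1/j μ-a.e. on K_{w_k} whenever n ≥ (M*+1)k, where μ(K_{w_k}) > 0. Then there exists f ∈ L^p(K,μ) with sup_{m≥1} σ^m E_p^m(P_m f) ≤ C₂ and f essentially unbounded on K; in particular f has no continuous version, so the Sobolev-type space {f ∈ L^p : sup_m σ^m E_p^m(P_m f) < ∞} is not contained in C(K). -/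
open MeasureTheory Filter Topology
open scoped ENNReal

noncomputable def Pavg {X T : Type*} [MeasurableSpace X] (μ : Measure X)
    (K : T → Set X) (g : X → ℝ) (w : T) : ℝ :=
  (μ (K w)).toReal⁻¹ * ∫ x in K w, g x ∂μ

lemma tendsto_limUnder_of_bounded (U : Ultrafilter ℕ) {s : ℕ → ℝ} {C : ℝ}
    (h : ∀ n, |s n| ≤ C) : Tendsto s (U : Filter ℕ) (𝓝 (limUnder (U : Filter ℕ) s)) := by
  refine tendsto_nhds_limUnder ?_
  have hmem : (↑(Ultrafilter.map s U) : Filter ℝ) ≤ Filter.principal (Set.Icc (-C) C) := by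
    rw [Filter.le_principal_iff]
    have : ∀ n, s n ∈ Set.Icc (-C) C := fun n => by
      have := abs_le.mp (h n); exact ⟨this.1, this.2⟩
    have : Set.Icc (-C) C ∈ Filter.map s (U : Filter ℕ) :=
      Filter.mem_map.mpr (Filter.mem_of_superset Filter.univ_mem (fun n _ => this n))
    simpa [Ultrafilter.coe_map] using this
  obtain ⟨a, -, ha⟩ := isCompact_Icc.ultrafilter_le_nhds (Ultrafilter.map s U) hmem
  exact ⟨a, ha⟩

lemma abs_integral_mul_le {X : Type*} [MeasurableSpace X] {μ : Measure X} {p q : ℝ}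
    (hpq : p.HolderConjugate q) {g h : X → ℝ} (hg : MemLp g (ENNReal.ofReal p) μ)
    (hh : MemLp h (ENNReal.ofReal q) μ) :
    |∫ x, g x * h x ∂μ| ≤
      (eLpNorm g (ENNReal.ofReal p) μ).toReal * (eLpNorm h (ENNReal.ofReal q) μ).toReal := by
  have hone : (1 : ℝ≥0∞) / 1 = 1 / ENNReal.ofReal p + 1 / ENNReal.ofReal q := by
    simpa [one_div] using hpq.inv_add_inv_ennreal.symm
  haveI : ENNReal.HolderTriple (ENNReal.ofReal p) (ENNReal.ofReal q) 1 :=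
    ⟨by simpa using hpq.inv_add_inv_ennreal⟩
  have hmem1 : MemLp (g • h) 1 μ := MemLp.smul hh hg
  have hint : Integrable (fun x => g x * h x) μ := by
    exact memLp_one_iff_integrable.mp hmem1
  have h1 : |∫ x, g x * h x ∂μ| ≤ ∫ x, ‖g x * h x‖ ∂μ := by
    simpa [Real.norm_eq_abs] using norm_integral_le_integral_norm (fun x => g x * h x) (μ := μ)
  have h2 : ∫ x, ‖g x * h x‖ ∂μ = (eLpNorm (g • h) 1 μ).toReal := by
    rw [eLpNorm_one_eq_lintegral_enorm,
      integral_norm_eq_lintegral_enorm hint.aestronglyMeasurable]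
    rfl
  have h3 : eLpNorm (g • h) 1 μ ≤ eLpNorm g (ENNReal.ofReal p) μ * eLpNorm h (ENNReal.ofReal q) μ :=
    eLpNorm_smul_le_mul_eLpNorm hh.aestronglyMeasurable hg.aestronglyMeasurable
  have hfin : eLpNorm g (ENNReal.ofReal p) μ * eLpNorm h (ENNReal.ofReal q) μ ≠ ⊤ :=
    ENNReal.mul_ne_top hg.2.ne hh.2.ne
  calc |∫ x, g x * h x ∂μ| ≤ (eLpNorm (g • h) 1 μ).toReal := h1.trans (le_of_eq h2)
    _ ≤ (eLpNorm g (ENNReal.ofReal p) μ * eLpNorm h (ENNReal.ofReal q) μ).toReal :=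
        ENNReal.toReal_mono hfin h3
    _ = _ := ENNReal.toReal_mul

lemma abs_integral_le_abs {X : Type*} [MeasurableSpace X] {μ : MeasureTheory.Measure X}
    (f : X → ℝ) : |∫ x, f x ∂μ| ≤ ∫ x, |f x| ∂μ := by
  simpa [Real.norm_eq_abs] using MeasureTheory.norm_integral_le_integral_norm (μ := μ) f

section helperC
variable {X : Type*} [MeasurableSpace X] {μ : Measure X} [IsFiniteMeasure μ] {p q : ℝ}

/-- truncation of values toward 0 onto the grid `(1/(k+1))ℤ` -/
noncomputable def Dgrid (k : ℕ) (y : ℝ) : ℝ :=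
  if 0 ≤ y then ((⌊y * (k+1)⌋ : ℤ) : ℝ) / ((k:ℝ)+1) else -(((⌊(-y) * (k+1)⌋ : ℤ) : ℝ) / ((k:ℝ)+1))

lemma Dgrid_nonneg_le {k : ℕ} {y : ℝ} (hy : 0 ≤ y) : 0 ≤ Dgrid k y ∧ Dgrid k y ≤ y := by
  have hk : (0:ℝ) < (k:ℝ)+1 := by positivity
  rw [Dgrid, if_pos hy]
  constructor
  · apply div_nonneg _ hk.le
    exact_mod_cast Int.floor_nonneg.mpr (by positivity)
  · rw [div_le_iff₀ hk]
    exact Int.floor_le _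

lemma Dgrid_close {k : ℕ} {y : ℝ} (hy : 0 ≤ y) : y - Dgrid k y ≤ 1 / ((k:ℝ)+1) := by
  have hk : (0:ℝ) < (k:ℝ)+1 := by positivity
  rw [Dgrid, if_pos hy, sub_le_iff_le_add, ← add_div, le_div_iff₀ hk]
  have := (Int.sub_one_lt_floor (y * ((k:ℝ)+1))).le
  linarith

lemma Dgrid_neg (k : ℕ) (y : ℝ) (hy : y < 0) : Dgrid k y = -Dgrid k (-y) := by
  rw [Dgrid, Dgrid, if_neg (not_le.mpr hy), if_pos (by linarith : (0:ℝ) ≤ -y)]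

lemma abs_Dgrid_le (k : ℕ) (y : ℝ) : |Dgrid k y| ≤ |y| := by
  rcases le_or_gt 0 y with hy | hy
  · obtain ⟨h1, h2⟩ := Dgrid_nonneg_le (k := k) hy
    rw [abs_of_nonneg h1, abs_of_nonneg hy]; exact h2
  · obtain ⟨h1, h2⟩ := Dgrid_nonneg_le (k := k) (by linarith : (0:ℝ) ≤ -y)
    rw [Dgrid_neg k y hy, abs_neg, abs_of_nonneg h1, abs_of_neg hy]; exact h2

lemma measurable_Dgrid (k : ℕ) {w : X → ℝ} (hw : Measurable w) :
    Measurable fun x => Dgrid k (w x) := by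
  unfold Dgrid
  apply Measurable.ite (measurableSet_le measurable_const hw)
  · apply Measurable.div_const
    exact Measurable.comp (f := fun x => ⌊w x * (k+1)⌋) measurable_from_top
      ((hw.mul_const _).floor)
  · apply Measurable.neg
    apply Measurable.div_const
    exact Measurable.comp (f := fun x => ⌊(-w x) * (k+1)⌋) measurable_from_top
      ((hw.neg.mul_const _).floor)

lemma finite_range_Dgrid (k : ℕ) {w : X → ℝ} {B : ℝ} (hw : ∀ x, |w x| ≤ B) :
    (Set.range fun x => Dgrid k (w x)).Finite := by
  have hk : (0:ℝ) < (k:ℝ)+1 := by positivity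
  apply Set.Finite.subset ((Set.finite_Icc (-(⌈B * ((k:ℝ)+1)⌉)) ⌈B * ((k:ℝ)+1)⌉).image
    (fun z : ℤ => (z:ℝ) / ((k:ℝ)+1)))
  rintro _ ⟨x, rfl⟩
  have hBx := hw x
  have key : ∀ y : ℝ, 0 ≤ y → y ≤ B → ⌊y * ((k:ℝ)+1)⌋ ∈ Set.Icc (-(⌈B * ((k:ℝ)+1)⌉)) ⌈B * ((k:ℝ)+1)⌉ := by
    intro y hy hyB
    constructor
    · have h0 : (0:ℤ) ≤ ⌊y * ((k:ℝ)+1)⌋ := Int.floor_nonneg.mpr (by positivity)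
      have hB0 : (0:ℤ) ≤ ⌈B * ((k:ℝ)+1)⌉ := Int.ceil_nonneg (by nlinarith)
      omega
    · have : y * ((k:ℝ)+1) ≤ B * ((k:ℝ)+1) := by nlinarith
      calc ⌊y * ((k:ℝ)+1)⌋ ≤ ⌈y * ((k:ℝ)+1)⌉ := Int.floor_le_ceil _
        _ ≤ ⌈B * ((k:ℝ)+1)⌉ := Int.ceil_le_ceil this
  rcases le_or_gt 0 (w x) with hy | hy
  · refine ⟨⌊w x * ((k:ℝ)+1)⌋, key _ hy (le_trans (le_abs_self _) hBx), ?_⟩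
    show ((⌊w x * ((k:ℝ)+1)⌋ : ℤ) : ℝ) / ((k:ℝ)+1) = Dgrid k (w x)
    rw [Dgrid, if_pos hy]
  · refine ⟨-⌊(-(w x)) * ((k:ℝ)+1)⌋, ?_, ?_⟩
    · have := key (-(w x)) (by linarith) (le_trans (neg_le_abs _) hBx)
      simp only [Set.mem_Icc] at this ⊢
      omega
    · show (((-⌊(-(w x)) * ((k:ℝ)+1)⌋ : ℤ)) : ℝ) / ((k:ℝ)+1) = Dgrid k (w x)
      rw [Dgrid_neg k _ hy, Dgrid, if_pos (by linarith : (0:ℝ) ≤ -(w x))]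
      push_cast
      ring
end helperC

noncomputable def phiT (p : ℝ) (N : ℕ) (t : ℝ) : ℝ :=
  (min (max t 0) N) ^ (p-1) - (min (max (-t) 0) N) ^ (p-1)

section phiT
variable {p : ℝ} (hp : 1 < p) (N : ℕ) {t : ℝ}
include hp

lemma phiT_of_nonneg (ht : 0 ≤ t) : phiT p N t = (min t N) ^ (p-1) := by
  rw [phiT, max_eq_left ht, max_eq_right (by linarith : -t ≤ 0),
    min_eq_left (by positivity : (0:ℝ) ≤ (N:ℝ)), Real.zero_rpow (by linarith : p - 1 ≠ 0), sub_zero]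

lemma phiT_of_neg (ht : t < 0) : phiT p N t = -((min (-t) N) ^ (p-1)) := by
  rw [phiT, max_eq_right ht.le, max_eq_left (by linarith : (0:ℝ) ≤ -t),
    min_eq_left (by positivity : (0:ℝ) ≤ (N:ℝ)), Real.zero_rpow (by linarith : p - 1 ≠ 0), zero_sub]

lemma phiT_nonneg_of_nonneg (ht : 0 ≤ t) : 0 ≤ phiT p N t := by
  rw [phiT_of_nonneg hp N ht]
  positivity

lemma abs_phiT (t : ℝ) : |phiT p N t| = (min |t| N) ^ (p-1) := by
  rcases le_or_gt 0 t with ht | ht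
  · rw [phiT_of_nonneg hp N ht, abs_of_nonneg ht,
      abs_of_nonneg (Real.rpow_nonneg (le_min ht (by positivity)) _)]
  · rw [phiT_of_neg hp N ht, abs_of_neg ht, abs_neg,
      abs_of_nonneg (Real.rpow_nonneg (le_min (by linarith) (by positivity)) _)]

lemma abs_phiT_le (t : ℝ) : |phiT p N t| ≤ (N:ℝ) ^ (p-1) := by
  rw [abs_phiT hp N t]
  exact Real.rpow_le_rpow (le_min (abs_nonneg _) (by positivity)) (min_le_right _ _)
    (by linarith)

lemma mul_phiT_ge (t : ℝ) : (min |t| N) ^ p ≤ t * phiT p N t := by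
  have key : t * phiT p N t = |t| * (min |t| N) ^ (p-1) := by
    rcases le_or_gt 0 t with ht | ht
    · rw [phiT_of_nonneg hp N ht, abs_of_nonneg ht]
    · rw [phiT_of_neg hp N ht, abs_of_neg ht]; ring
  rw [key]
  have h0 : (0:ℝ) ≤ min |t| N := le_min (abs_nonneg _) (by positivity)
  have : (min |t| ↑N) ^ p = min |t| ↑N * (min |t| ↑N) ^ (p-1) := by
    rw [← Real.rpow_one_add' h0 (by linarith : 1 + (p-1) ≠ 0)]
    ring_nf
  rw [this]
  exact mul_le_mul_of_nonneg_right (min_le_left _ _) (Real.rpow_nonneg h0 _)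

lemma continuous_phiT : Continuous (phiT p N) := by
  have h1 : (0:ℝ) ≤ p - 1 := by linarith
  apply Continuous.sub
  · exact (Real.continuous_rpow_const h1).comp ((continuous_id.max continuous_const).min
      continuous_const)
  · exact (Real.continuous_rpow_const h1).comp ((continuous_neg.max continuous_const).min
      continuous_const)
end phiT

lemma memLp_of_dual_finite_range {X : Type*} [MeasurableSpace X] {μ : Measure X}
    [IsFiniteMeasure μ] {p q : ℝ} (hpq : Real.HolderConjugate p q) {f : X → ℝ}
    (hmf : Measurable f) (hf : Integrable f μ) {C : ℝ} (hC : 0 ≤ C)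
    (hdual : ∀ h : X → ℝ, Measurable h → (Set.range h).Finite →
      |∫ x, f x * h x ∂μ| ≤ C * (eLpNorm h (ENNReal.ofReal q) μ).toReal) :
    MemLp f (ENNReal.ofReal p) μ := by
  classical
  have hp1 : 1 < p := hpq.lt
  have hp0 : 0 < p := hpq.pos
  have hq0 : 0 < q := hpq.symm.pos
  have main : ∀ N : ℕ, ∫⁻ x, ENNReal.ofReal ((min |f x| N) ^ p) ∂μ ≤ ENNReal.ofReal (C ^ p) := by
    intro N
    set F : X → ℝ := fun x => (min |f x| N) ^ p with hFdef
    have hmin_nn : ∀ x, (0:ℝ) ≤ min |f x| N := fun x => le_min (abs_nonneg _) (by positivity)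
    have hFnn : ∀ x, 0 ≤ F x := fun x => Real.rpow_nonneg (hmin_nn x) _
    have hFmeas : Measurable F := by
      apply Measurable.comp (f := fun x => min |f x| (N:ℝ)) (g := fun y => y ^ p)
      · exact (Real.continuous_rpow_const hp0.le).measurable
      · exact hmf.abs.min measurable_const
    have hFle : ∀ x, F x ≤ (N:ℝ)^p :=
      fun x => Real.rpow_le_rpow (hmin_nn x) (min_le_right _ _) hp0.le
    have hFint : Integrable F μ := by
      refine MemLp.integrable le_top (memLp_top_of_bound hFmeas.aestronglyMeasurable ((N:ℝ)^p)
        (ae_of_all _ fun x => ?_))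
      rw [Real.norm_eq_abs, abs_of_nonneg (hFnn x)]
      exact hFle x
    have hphif_meas : Measurable (fun x => phiT p N (f x)) :=
      (continuous_phiT hp1 N).measurable.comp hmf
    have hphibd : ∀ x, |phiT p N (f x)| ≤ (N:ℝ)^(p-1) := fun x => abs_phiT_le hp1 N _
    have hmul_int : ∀ (w : X → ℝ), Measurable w → (∀ x, |w x| ≤ (N:ℝ)^(p-1)) →
        Integrable (fun x => f x * w x) μ := by
      intro w hwm hwb
      refine Integrable.mono (hf.const_mul ((N:ℝ)^(p-1))) (hmf.mul hwm).aestronglyMeasurable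
        (ae_of_all _ fun x => ?_)
      have h1 : ‖(N:ℝ)^(p-1) * f x‖ = (N:ℝ)^(p-1) * |f x| := by
        rw [Real.norm_eq_abs, abs_mul, abs_of_nonneg (Real.rpow_nonneg (by positivity) _)]
      rw [Real.norm_eq_abs, abs_mul, h1, mul_comm ((N:ℝ)^(p-1))]
      exact mul_le_mul_of_nonneg_left (hwb x) (abs_nonneg _)
    have hfphi_int : Integrable (fun x => f x * phiT p N (f x)) μ :=
      hmul_int _ hphif_meas hphibd
    set E : ℝ := (eLpNorm (fun x => phiT p N (f x)) (ENNReal.ofReal q) μ).toReal with hEdef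
    have hphiLq : MemLp (fun x => phiT p N (f x)) (ENNReal.ofReal q) μ :=
      (memLp_top_of_bound hphif_meas.aestronglyMeasurable ((N:ℝ)^(p-1))
        (ae_of_all _ fun x => by rw [Real.norm_eq_abs]; exact hphibd x)).mono_exponent le_top
    -- step 2 : pairing with grid truncations
    have step2 : ∀ k : ℕ, ∫ x, f x * Dgrid k (phiT p N (f x)) ∂μ ≤ C * E := by
      intro k
      have hmeasD := measurable_Dgrid k hphif_meas
      have hranD := finite_range_Dgrid k (w := fun x => phiT p N (f x)) hphibd
      have h1 := hdual _ hmeasD hranD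
      have h2 : eLpNorm (fun x => Dgrid k (phiT p N (f x))) (ENNReal.ofReal q) μ ≤
          eLpNorm (fun x => phiT p N (f x)) (ENNReal.ofReal q) μ :=
        eLpNorm_mono (fun x => by
          rw [Real.norm_eq_abs, Real.norm_eq_abs]; exact abs_Dgrid_le k _)
      calc ∫ x, f x * Dgrid k (phiT p N (f x)) ∂μ
          ≤ |∫ x, f x * Dgrid k (phiT p N (f x)) ∂μ| := le_abs_self _
        _ ≤ C * (eLpNorm (fun x => Dgrid k (phiT p N (f x))) (ENNReal.ofReal q) μ).toReal := h1
        _ ≤ C * E := mul_le_mul_of_nonneg_left (ENNReal.toReal_mono hphiLq.2.ne h2) hC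
    -- step 1 : pointwise grid approximation
    have hkey : ∀ (k : ℕ) (x : X), f x * phiT p N (f x) ≤
        f x * Dgrid k (phiT p N (f x)) + |f x| * (1/((k:ℝ)+1)) := by
      intro k x
      have hkpos : (0:ℝ) < (k:ℝ)+1 := by positivity
      rcases le_or_gt 0 (f x) with ht | ht
      · have hy : 0 ≤ phiT p N (f x) := phiT_nonneg_of_nonneg hp1 N ht
        obtain ⟨hD0, hDle⟩ := Dgrid_nonneg_le (k := k) hy
        have hcl := Dgrid_close (k := k) hy
        have habs : |f x| = f x := abs_of_nonneg ht
        nlinarith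
      · have hy : phiT p N (f x) ≤ 0 := by
          rw [phiT_of_neg hp1 N ht]
          exact neg_nonpos.mpr (Real.rpow_nonneg (le_min (by linarith) (by positivity)) _)
        rcases eq_or_lt_of_le hy with hy0 | hyneg
        · have hD0 : Dgrid k (phiT p N (f x)) = 0 := by
            rw [hy0]; simp [Dgrid]
          rw [hD0, hy0]
          have := abs_nonneg (f x)
          have : (0:ℝ) ≤ |f x| * (1/((k:ℝ)+1)) := by positivity
          nlinarith
        · obtain ⟨hD0, hDle⟩ := Dgrid_nonneg_le (k := k) (neg_nonneg.mpr hyneg.le)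
          have hcl := Dgrid_close (k := k) (neg_nonneg.mpr hyneg.le)
          have hDeq := Dgrid_neg k _ hyneg
          have habs : |f x| = -f x := abs_of_neg ht
          nlinarith
    -- step 3 : limit over k
    have step3 : ∫ x, f x * phiT p N (f x) ∂μ ≤ C * E := by
      refine le_of_forall_pos_le_add fun ε hε => ?_
      set I : ℝ := ∫ x, |f x| ∂μ with hIdef
      have hI0 : 0 ≤ I := integral_nonneg fun x => abs_nonneg _
      have hfabs_int : Integrable (fun x => |f x|) μ := hf.abs
      obtain ⟨k, hk⟩ := exists_nat_gt (I / ε)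
      have hkpos : (0:ℝ) < (k:ℝ)+1 := by positivity
      have hIk : I * (1/((k:ℝ)+1)) < ε := by
        rw [mul_one_div, div_lt_iff₀ hkpos]
        have : I < ε * k := by
          rw [div_lt_iff₀ hε] at hk
          linarith [hk]
        nlinarith
      have hDint : Integrable (fun x => f x * Dgrid k (phiT p N (f x))) μ :=
        hmul_int _ (measurable_Dgrid k hphif_meas)
          (fun x => le_trans (abs_Dgrid_le k _) (hphibd x))
      have hsum_int : Integrable
          (fun x => f x * Dgrid k (phiT p N (f x)) + |f x| * (1/((k:ℝ)+1))) μ :=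
        hDint.add (hfabs_int.mul_const _)
      calc ∫ x, f x * phiT p N (f x) ∂μ
          ≤ ∫ x, (f x * Dgrid k (phiT p N (f x)) + |f x| * (1/((k:ℝ)+1))) ∂μ :=
            integral_mono hfphi_int hsum_int (fun x => hkey k x)
        _ = (∫ x, f x * Dgrid k (phiT p N (f x)) ∂μ) + I * (1/((k:ℝ)+1)) := by
            rw [integral_add hDint (hfabs_int.mul_const _), integral_mul_const]
        _ ≤ C * E + ε := add_le_add (step2 k) hIk.le
    -- step 4
    have step4 : ∫ x, F x ∂μ ≤ C * E :=
      le_trans (integral_mono hFint hfphi_int (fun x => mul_phiT_ge hp1 N (f x))) step3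
    -- step 5 : E = (∫ F) ^ (1/q)
    set XN : ℝ := ∫ x, F x ∂μ with hXNdef
    have hXN0 : 0 ≤ XN := integral_nonneg hFnn
    have step5 : E = XN ^ (1/q) := by
      have hql : (ENNReal.ofReal q) ≠ 0 := ne_of_gt (ENNReal.ofReal_pos.mpr hq0)
      have hpt : ∀ x, ‖phiT p N (f x)‖ₑ ^ q = ENNReal.ofReal (F x) := by
        intro x
        rw [← ofReal_norm, Real.norm_eq_abs,
          ENNReal.ofReal_rpow_of_nonneg (abs_nonneg _) hq0.le]
        congr 1
        simp only [hFdef]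
        rw [abs_phiT hp1, ← Real.rpow_mul (hmin_nn x), hpq.sub_one_mul_conj]
      rw [hEdef, eLpNorm_eq_lintegral_rpow_enorm_toReal hql ENNReal.ofReal_ne_top,
        ENNReal.toReal_ofReal hq0.le]
      rw [lintegral_congr hpt, ← ofReal_integral_eq_lintegral_ofReal hFint (ae_of_all _ hFnn)]
      rw [← ENNReal.toReal_rpow, ENNReal.toReal_ofReal hXN0]
    -- step 6 : XN ≤ C^p
    have hXCp : XN ≤ C ^ p := by
      rcases eq_or_lt_of_le hXN0 with h0 | hXNpos
      · rw [← h0]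
        positivity
      · have hEq : XN ^ (1/p) * XN ^ (1/q) = XN := by
          rw [← Real.rpow_add hXNpos]
          rw [one_div, one_div, hpq.inv_add_inv_eq_one, Real.rpow_one]
        have h1 : XN ^ (1/p) * XN ^ (1/q) ≤ C * XN ^ (1/q) := by
          rw [hEq, ← step5]; exact step4
        have h2 : XN ^ (1/p) ≤ C :=
          le_of_mul_le_mul_right h1 (Real.rpow_pos_of_pos hXNpos _)
        have h3 : (XN ^ (1/p)) ^ p ≤ C ^ p :=
          Real.rpow_le_rpow (Real.rpow_nonneg hXN0 _) h2 hp0.le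
        rwa [← Real.rpow_mul hXN0, one_div, inv_mul_cancel₀ hp0.ne', Real.rpow_one] at h3
    rw [← ofReal_integral_eq_lintegral_ofReal hFint (ae_of_all _ hFnn)]
    exact ENNReal.ofReal_le_ofReal hXCp
  have main' : ∀ N : ℕ, ∫⁻ x, ENNReal.ofReal ((min |f x| N) ^ p) ∂μ ≤ ENNReal.ofReal (C ^ p) :=
    main
  -- conclude via monotone convergence
  refine ⟨hmf.aestronglyMeasurable, ?_⟩
  rw [eLpNorm_eq_lintegral_rpow_enorm_toReal (ne_of_gt (ENNReal.ofReal_pos.mpr hp0))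
    ENNReal.ofReal_ne_top, ENNReal.toReal_ofReal hp0.le]
  have hmin_nn : ∀ (x : X) (N : ℕ), (0:ℝ) ≤ min |f x| N :=
    fun x N => le_min (abs_nonneg _) (by positivity)
  have hpt : ∀ x, (⨆ N : ℕ, ENNReal.ofReal ((min |f x| N) ^ p)) = ‖f x‖ₑ ^ p := by
    intro x
    have hco : ‖f x‖ₑ ^ p = ENNReal.ofReal (|f x| ^ p) := by
      rw [← ofReal_norm, Real.norm_eq_abs,
        ENNReal.ofReal_rpow_of_nonneg (abs_nonneg _) hp0.le]
    rw [hco]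
    apply le_antisymm
    · refine iSup_le fun N => ENNReal.ofReal_le_ofReal ?_
      exact Real.rpow_le_rpow (hmin_nn x N) (min_le_left _ _) hp0.le
    · refine le_iSup_of_le ⌈|f x|⌉₊ (le_of_eq ?_)
      rw [min_eq_left (Nat.le_ceil _)]
  have hmeas : ∀ N : ℕ, Measurable fun x => ENNReal.ofReal ((min |f x| N) ^ p) := by
    intro N
    apply Measurable.ennreal_ofReal
    apply Measurable.comp (f := fun x => min |f x| (N:ℝ)) (g := fun y => y ^ p)
    · exact (Real.continuous_rpow_const hp0.le).measurable
    · exact hmf.abs.min measurable_const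
  have hmono : Monotone fun (N : ℕ) (x : X) => ENNReal.ofReal ((min |f x| N) ^ p) := by
    intro N M hNM
    intro x
    apply ENNReal.ofReal_le_ofReal
    exact Real.rpow_le_rpow (hmin_nn x N) (min_le_min le_rfl (Nat.cast_le.mpr hNM)) hp0.le
  have hbound : ∫⁻ x, ‖f x‖ₑ ^ p ∂μ ≤ ENNReal.ofReal (C ^ p) := by
    rw [lintegral_congr fun x => (hpt x).symm, lintegral_iSup hmeas hmono]
    exact iSup_le fun N => main' N
  calc (∫⁻ x, ‖f x‖ₑ ^ p ∂μ) ^ (1/p)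
      ≤ (ENNReal.ofReal (C ^ p)) ^ (1/p) := ENNReal.rpow_le_rpow hbound (by positivity)
    _ < ⊤ := ENNReal.rpow_lt_top_of_nonneg (by positivity) ENNReal.ofReal_ne_top

/-- if `σ ≤ 1` and there are `ĝ_n ∈ L^p(K,μ)` uniformly bounded in `L^p`,
with `σ^m E_p^m(P_m ĝ_n) ≤ C₂` for `1 ≤ m ≤ n`, and `ĝ_n ≥ Σ_{j=1}^k 1/j` a.e. on
`K_{w_k}` (of positive measure) whenever `n ≥ (M*+1)k`, then there exists
`f ∈ L^p(K,μ)` with `sup_m σ^m E_p^m(P_m f) ≤ C₂` that is essentially unbounded; in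
particular `f` has no continuous version, so the Sobolev-type space is not contained
in `C(K)`. -/
theorem kigami_conjecture_counterexample {X T : Type*} [MetricSpace X] [CompactSpace X]
    [MeasurableSpace X] [BorelSpace X] (μ : Measure X) [IsProbabilityMeasure μ]
    (K : T → Set X) (Tm : ℕ → Finset T)
    (hKmeas : ∀ w, MeasurableSet (K w)) (hμpos : ∀ w, 0 < μ (K w))
    (p q σ : ℝ) (hpq : p.HolderConjugate q) (hσ0 : 0 < σ) (hσ1 : σ ≤ 1)
    (Mstar : ℕ) (hM : 1 ≤ Mstar) (wseq : ℕ → T) (C₁ C₂ : ℝ)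
    (g : ℕ → X → ℝ) (hg : ∀ n, MemLp (g n) (ENNReal.ofReal p) μ)
    (hnorm : ∀ n, eLpNorm (g n) (ENNReal.ofReal p) μ ≤ ENNReal.ofReal C₁)
    (henergy : ∀ n m : ℕ, 1 ≤ m → m ≤ n →
      σ ^ m * energyF p K (Tm m) (Pavg μ K (g n)) ≤ C₂)
    (hlower : ∀ k n : ℕ, (Mstar + 1) * k ≤ n → ∀ᵐ x ∂μ, x ∈ K (wseq k) →
      (∑ j ∈ Finset.Icc 1 k, (j : ℝ)⁻¹) ≤ g n x) :
    ∃ f : X → ℝ, MemLp f (ENNReal.ofReal p) μ ∧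
      (∀ m : ℕ, 1 ≤ m → σ ^ m * energyF p K (Tm m) (Pavg μ K f) ≤ C₂) ∧
      (¬ ∃ b : ℝ, ∀ᵐ x ∂μ, |f x| ≤ b) ∧
      ¬ ∃ h : X → ℝ, Continuous h ∧ f =ᵐ[μ] h := by
  classical
  have hp1 : 1 < p := hpq.lt
  have hp0 : 0 < p := hpq.pos
  have hq0 : 0 < q := hpq.symm.pos
  have hr1 : (1:ℝ≥0∞) ≤ ENNReal.ofReal p := by
    rw [← ENNReal.ofReal_one]
    exact ENNReal.ofReal_le_ofReal hp1.le
  set C' : ℝ := max C₁ 0 with hC'def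
  have hC'0 : 0 ≤ C' := le_max_right _ _
  have hnorm' : ∀ n, eLpNorm (g n) (ENNReal.ofReal p) μ ≤ ENNReal.ofReal C' :=
    fun n => (hnorm n).trans (ENNReal.ofReal_le_ofReal (le_max_left _ _))
  have hgint : ∀ n, Integrable (g n) μ := fun n => (hg n).integrable hr1
  have hnormtoReal : ∀ n, (eLpNorm (g n) (ENNReal.ofReal p) μ).toReal ≤ C' :=
    fun n => ENNReal.toReal_le_of_le_ofReal hC'0 (hnorm' n)
  -- uniform L¹-type bound for set integrals
  have habs : ∀ (n : ℕ) (A : Set X), |∫ x in A, g n x ∂μ| ≤ C' := by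
    intro n A
    have h1 : |∫ x in A, g n x ∂μ| ≤ ∫ x in A, |g n x| ∂μ :=
      abs_integral_le_abs _
    have h2 : ∫ x in A, |g n x| ∂μ ≤ ∫ x, |g n x| ∂μ :=
      setIntegral_le_integral (hgint n).abs (ae_of_all _ fun x => abs_nonneg _)
    have h3 : ∫ x, |g n x| ∂μ = (eLpNorm (g n) 1 μ).toReal := by
      rw [eLpNorm_one_eq_lintegral_enorm]
      simpa [Real.norm_eq_abs] using
        integral_norm_eq_lintegral_enorm (hgint n).aestronglyMeasurable
    have h4 : eLpNorm (g n) 1 μ ≤ ENNReal.ofReal C' :=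
      le_trans (eLpNorm_le_eLpNorm_of_exponent_le hr1 (hg n).aestronglyMeasurable) (hnorm' n)
    calc |∫ x in A, g n x ∂μ| ≤ ∫ x in A, |g n x| ∂μ := h1
      _ ≤ ∫ x, |g n x| ∂μ := h2
      _ = (eLpNorm (g n) 1 μ).toReal := h3
      _ ≤ C' := ENNReal.toReal_le_of_le_ofReal hC'0 h4
  -- the ultrafilter and the limit set function
  let U : Ultrafilter ℕ := Ultrafilter.of atTop
  have hUle : (U : Filter ℕ) ≤ atTop := Ultrafilter.of_le _
  set lam : Set X → ℝ :=
    fun A => limUnder (U : Filter ℕ) (fun n => ∫ x in A, g n x ∂μ) with hlamdef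
  have hlam_tendsto : ∀ A : Set X,
      Tendsto (fun n => ∫ x in A, g n x ∂μ) (U : Filter ℕ) (𝓝 (lam A)) :=
    fun A => tendsto_limUnder_of_bounded U (fun n => habs n A)
  -- Hölder-type bound
  have hholder : ∀ (n : ℕ) (A : Set X), MeasurableSet A →
      |∫ x in A, g n x ∂μ| ≤ C' * ((μ A).toReal ^ (1/q)) := by
    intro n A hA
    have hind : MemLp (A.indicator (fun _ => (1:ℝ))) (ENNReal.ofReal q) μ :=
      (memLp_const (1:ℝ)).indicator hA
    have h1 : ∫ x in A, g n x ∂μ = ∫ x, g n x * A.indicator (fun _ => (1:ℝ)) x ∂μ := by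
      rw [← integral_indicator hA]
      congr 1
      funext x
      by_cases hx : x ∈ A <;> simp [hx]
    rw [h1]
    refine (abs_integral_mul_le hpq (hg n) hind).trans ?_
    have h2 : eLpNorm (A.indicator fun _ => (1:ℝ)) (ENNReal.ofReal q) μ = μ A ^ (1/q) := by
      rw [eLpNorm_indicator_const hA (ne_of_gt (ENNReal.ofReal_pos.mpr hq0))
        ENNReal.ofReal_ne_top, ENNReal.toReal_ofReal hq0.le]
      simp
    rw [h2, ← ENNReal.toReal_rpow]
    exact mul_le_mul (hnormtoReal n) le_rfl (by positivity) hC'0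
  have hlam_bound : ∀ A : Set X, MeasurableSet A →
      |lam A| ≤ C' * ((μ A).toReal ^ (1/q)) := by
    intro A hA
    exact le_of_tendsto ((hlam_tendsto A).abs)
      (Eventually.of_forall fun n => hholder n A hA)
  -- additivity
  have hlam_empty : lam ∅ = 0 := by
    refine tendsto_nhds_unique (hlam_tendsto ∅) ?_
    simpa using (tendsto_const_nhds : Tendsto (fun _ : ℕ => (0:ℝ)) _ _)
  have hfinadd : ∀ (A : ℕ → Set X), (∀ i, MeasurableSet (A i)) → Pairwise (Function.onFun Disjoint A) →
      ∀ u : Finset ℕ, lam (⋃ i ∈ u, A i) = ∑ i ∈ u, lam (A i) := by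
    intro A hA hd u
    refine tendsto_nhds_unique (hlam_tendsto _) ?_
    have hcong : ∀ n, ∫ x in ⋃ i ∈ u, A i, g n x ∂μ = ∑ i ∈ u, ∫ x in A i, g n x ∂μ :=
      fun n => integral_biUnion_finset u (fun i _ => hA i) (hd.set_pairwise _)
        (fun i _ => (hgint n).integrableOn)
    exact Tendsto.congr (fun n => (hcong n).symm)
      (tendsto_finset_sum u (fun i _ => hlam_tendsto (A i)))
  have htwoadd : ∀ A B : Set X, MeasurableSet B → Disjoint A B →
      lam (A ∪ B) = lam A + lam B := by
    intro A B hB hd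
    refine tendsto_nhds_unique (hlam_tendsto _) ?_
    have hcong : ∀ n, ∫ x in A ∪ B, g n x ∂μ =
        (∫ x in A, g n x ∂μ) + ∫ x in B, g n x ∂μ :=
      fun n => setIntegral_union hd hB (hgint n).integrableOn (hgint n).integrableOn
    exact Tendsto.congr (fun n => (hcong n).symm)
      ((hlam_tendsto A).add (hlam_tendsto B))
  -- sigma additivity
  have hiUnion : ∀ (A : ℕ → Set X), (∀ i, MeasurableSet (A i)) → Pairwise (Function.onFun Disjoint A) →
      HasSum (fun i => lam (A i)) (lam (⋃ i, A i)) := by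
    intro A hA hd
    have habs_sum : ∀ u : Finset ℕ, ∑ i ∈ u, |lam (A i)| ≤ C' := by
      intro u
      refine le_of_tendsto (tendsto_finset_sum u (fun i _ => (hlam_tendsto (A i)).abs))
        (Eventually.of_forall fun n => ?_)
      have h1 : ∑ i ∈ u, |∫ x in A i, g n x ∂μ| ≤ ∑ i ∈ u, ∫ x in A i, |g n x| ∂μ :=
        Finset.sum_le_sum fun i _ => abs_integral_le_abs _
      have h2 : ∑ i ∈ u, ∫ x in A i, |g n x| ∂μ = ∫ x in ⋃ i ∈ u, A i, |g n x| ∂μ :=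
        (integral_biUnion_finset u (fun i _ => hA i) (hd.set_pairwise _)
          (fun i _ => (hgint n).abs.integrableOn)).symm
      have h3 : ∫ x in ⋃ i ∈ u, A i, |g n x| ∂μ ≤ ∫ x, |g n x| ∂μ :=
        setIntegral_le_integral (hgint n).abs (ae_of_all _ fun x => abs_nonneg _)
      have h4 : ∫ x, |g n x| ∂μ = (eLpNorm (g n) 1 μ).toReal := by
        rw [eLpNorm_one_eq_lintegral_enorm]
        simpa [Real.norm_eq_abs] using
          integral_norm_eq_lintegral_enorm (hgint n).aestronglyMeasurable
      have h5 : (eLpNorm (g n) 1 μ).toReal ≤ C' :=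
        ENNReal.toReal_le_of_le_ofReal hC'0
          (le_trans (eLpNorm_le_eLpNorm_of_exponent_le hr1 (hg n).aestronglyMeasurable)
            (hnorm' n))
      calc ∑ i ∈ u, |∫ x in A i, g n x ∂μ|
          ≤ ∑ i ∈ u, ∫ x in A i, |g n x| ∂μ := h1
        _ = ∫ x in ⋃ i ∈ u, A i, |g n x| ∂μ := h2
        _ ≤ ∫ x, |g n x| ∂μ := h3
        _ = (eLpNorm (g n) 1 μ).toReal := h4
        _ ≤ C' := h5
    have hsummable : Summable fun i => lam (A i) :=
      Summable.of_abs (summable_of_sum_le (fun i => abs_nonneg _) habs_sum)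
    -- decomposition into head and tail
    have hsplit : ∀ N : ℕ, (⋃ i, A i) = (⋃ i ∈ Finset.range N, A i) ∪ ⋃ i, A (i + N) := by
      intro N
      ext x
      simp only [Set.mem_iUnion, Set.mem_union, Finset.mem_range]
      constructor
      · rintro ⟨i, hi⟩
        rcases lt_or_ge i N with h | h
        · exact Or.inl ⟨i, h, hi⟩
        · exact Or.inr ⟨i - N, by rwa [Nat.sub_add_cancel h]⟩
      · rintro (⟨i, _, hi⟩ | ⟨i, hi⟩)
        exacts [⟨i, hi⟩, ⟨i + N, hi⟩]
    have htail_meas : ∀ N : ℕ, MeasurableSet (⋃ i, A (i + N)) :=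
      fun N => MeasurableSet.iUnion fun i => hA _
    have hdisj2 : ∀ N : ℕ, Disjoint (⋃ i ∈ Finset.range N, A i) (⋃ i, A (i + N)) := by
      intro N
      rw [Set.disjoint_left]
      intro x hx1 hx2
      simp only [Set.mem_iUnion, Finset.mem_range] at hx1 hx2
      obtain ⟨i, hiN, hxi⟩ := hx1
      obtain ⟨j, hxj⟩ := hx2
      exact Set.disjoint_left.mp (hd (show i ≠ j + N by omega)) hxi hxj
    have hμtail : Tendsto (fun N => μ (⋃ i, A (i + N))) atTop (𝓝 0) := by
      have hne : (∑' i, μ (A i)) ≠ ⊤ := by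
        rw [← measure_iUnion hd hA]
        exact (measure_lt_top μ _).ne
      have heq : ∀ N : ℕ, μ (⋃ i, A (i + N)) = ∑' i, μ (A (i + N)) := by
        intro N
        refine measure_iUnion ?_ (fun i => hA _)
        exact fun i j hij => hd (show i + N ≠ j + N by omega)
      simpa only [heq] using ENNReal.tendsto_sum_nat_add (fun i => μ (A i)) hne
    have hlamtail : Tendsto (fun N => lam (⋃ i, A (i + N))) atTop (𝓝 0) := by
      have hgle : ∀ N, ‖lam (⋃ i, A (i + N))‖ ≤
          C' * ((μ (⋃ i, A (i + N))).toReal ^ (1/q)) := fun N => by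
        rw [Real.norm_eq_abs]
        exact hlam_bound _ (htail_meas N)
      refine squeeze_zero_norm hgle ?_
      · have h0 : Tendsto (fun N => (μ (⋃ i, A (i + N))).toReal) atTop (𝓝 0) := by
          have := (ENNReal.tendsto_toReal (by simp : (0:ℝ≥0∞) ≠ ⊤)).comp hμtail
          simpa [Function.comp_def] using this
        have h1 : Tendsto (fun N => (μ (⋃ i, A (i + N))).toReal ^ (1/q)) atTop (𝓝 0) := by
          have := h0.rpow_const (Or.inr (by positivity : (0:ℝ) ≤ 1/q))
          rwa [Real.zero_rpow (by positivity : (1:ℝ)/q ≠ 0)] at this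
        simpa using h1.const_mul C'
    have hpartial : Tendsto (fun N => ∑ i ∈ Finset.range N, lam (A i)) atTop
        (𝓝 (lam (⋃ i, A i))) := by
      have heq : ∀ N : ℕ, ∑ i ∈ Finset.range N, lam (A i) =
          lam (⋃ i, A i) - lam (⋃ i, A (i + N)) := by
        intro N
        have := htwoadd (⋃ i ∈ Finset.range N, A i) (⋃ i, A (i + N)) (htail_meas N) (hdisj2 N)
        rw [← hsplit N] at this
        rw [← hfinadd A hA hd (Finset.range N)]
        linarith
      rw [show (𝓝 (lam (⋃ i, A i))) = 𝓝 (lam (⋃ i, A i) - 0) by rw [sub_zero]]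
      exact Tendsto.congr (fun N => (heq N).symm) (tendsto_const_nhds.sub hlamtail)
    have : (∑' i, lam (A i)) = lam (⋃ i, A i) :=
      tendsto_nhds_unique hsummable.hasSum.tendsto_sum_nat hpartial
    exact this ▸ hsummable.hasSum
  -- the signed measure
  let sVM : SignedMeasure X :=
    { measureOf' := fun A => if MeasurableSet A then lam A else 0
      empty' := by
        show (if MeasurableSet (∅ : Set X) then lam ∅ else 0) = 0
        rw [if_pos MeasurableSet.empty]
        exact hlam_empty
      not_measurable' := fun A hA => if_neg hA
      m_iUnion' := by
        intro A hA hd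
        simp only [if_pos (hA _), if_pos (MeasurableSet.iUnion hA)]
        exact hiUnion A hA hd }
  have hsVM_apply : ∀ A : Set X, MeasurableSet A → sVM A = lam A := fun A hA => by
    show (if MeasurableSet A then lam A else 0) = lam A
    exact if_pos hA
  have hac : sVM ≪ᵥ μ.toENNRealVectorMeasure := by
    intro A hA0
    by_cases hA : MeasurableSet A
    · rw [Measure.toENNRealVectorMeasure_apply_measurable hA] at hA0
      rw [hsVM_apply A hA]
      have hz : ∀ n, ∫ x in A, g n x ∂μ = 0 := by
        intro n
        rw [Measure.restrict_eq_zero.mpr hA0, integral_zero_measure]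
      refine tendsto_nhds_unique (hlam_tendsto A) ?_
      simpa only [hz] using (tendsto_const_nhds : Tendsto (fun _ : ℕ => (0:ℝ)) _ _)
    · exact VectorMeasure.not_measurable _ hA
  -- the weak limit function
  set f : X → ℝ := SignedMeasure.rnDeriv sVM μ with hfdef
  have hfint : Integrable f μ := SignedMeasure.integrable_rnDeriv sVM μ
  have hfmeas : Measurable f := SignedMeasure.measurable_rnDeriv sVM μ
  have hfset : ∀ A : Set X, MeasurableSet A → ∫ x in A, f x ∂μ = lam A := by
    intro A hA
    have hwd := SignedMeasure.withDensityᵥ_rnDeriv_eq sVM μ hac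
    calc ∫ x in A, f x ∂μ = μ.withDensityᵥ f A := (withDensityᵥ_apply hfint hA).symm
      _ = sVM A := by rw [hwd]
      _ = lam A := hsVM_apply A hA
  -- pairing against finite-range functions, and MemLp
  have hpair : ∀ h : X → ℝ, Measurable h → (Set.range h).Finite →
      |∫ x, f x * h x ∂μ| ≤ C' * (eLpNorm h (ENNReal.ofReal q) μ).toReal := by
    intro h hmh hrange
    set sF : Finset ℝ := hrange.toFinset with hsFdef
    have hmem : ∀ x, h x ∈ sF := fun x => hrange.mem_toFinset.mpr (Set.mem_range_self x)
    have hBbd : ∀ x, |h x| ≤ ∑ c ∈ sF, |c| :=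
      fun x => Finset.single_le_sum (fun c _ => abs_nonneg c) (hmem x)
    have hhLq : MemLp h (ENNReal.ofReal q) μ :=
      (memLp_top_of_bound hmh.aestronglyMeasurable _
        (ae_of_all _ fun x => by rw [Real.norm_eq_abs]; exact hBbd x)).mono_exponent le_top
    have hptw : ∀ (u : X → ℝ) (x : X),
        u x * h x = ∑ c ∈ sF, (h ⁻¹' {c}).indicator (fun y => c * u y) x := by
      intro u x
      rw [Finset.sum_eq_single (h x)]
      · rw [Set.indicator_of_mem (by simp : x ∈ h ⁻¹' {h x})]
        ring
      · intro c _ hne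
        exact Set.indicator_of_notMem (by simpa using fun hh => hne hh.symm) _
      · intro hnot
        exact absurd (hmem x) hnot
    have hint_dec : ∀ (u : X → ℝ), Integrable u μ →
        ∫ x, u x * h x ∂μ = ∑ c ∈ sF, c * ∫ x in h ⁻¹' {c}, u x ∂μ := by
      intro u hu
      rw [show (fun x => u x * h x) = fun x => ∑ c ∈ sF, (h ⁻¹' {c}).indicator
        (fun y => c * u y) x from funext (hptw u)]
      rw [integral_finset_sum _ (fun c _ => ((hu.const_mul c).indicator
        (hmh (measurableSet_singleton c))))]
      refine Finset.sum_congr rfl fun c _ => ?_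
      rw [integral_indicator (hmh (measurableSet_singleton c)), integral_const_mul]
    have htend2 : Tendsto (fun n => ∫ x, g n x * h x ∂μ) (U : Filter ℕ)
        (𝓝 (∫ x, f x * h x ∂μ)) := by
      rw [hint_dec f hfint]
      have h1 : Tendsto (fun n => ∑ c ∈ sF, c * ∫ x in h ⁻¹' {c}, g n x ∂μ) (U : Filter ℕ)
          (𝓝 (∑ c ∈ sF, c * lam (h ⁻¹' {c}))) :=
        tendsto_finset_sum sF (fun c _ => (hlam_tendsto (h ⁻¹' {c})).const_mul c)
      have h2 : (∑ c ∈ sF, c * lam (h ⁻¹' {c})) = ∑ c ∈ sF, c * ∫ x in h ⁻¹' {c}, f x ∂μ :=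
        Finset.sum_congr rfl fun c _ => by rw [hfset _ (hmh (measurableSet_singleton c))]
      rw [← h2]
      exact Tendsto.congr (fun n => (hint_dec (g n) (hgint n)).symm) h1
    refine le_of_tendsto htend2.abs (Eventually.of_forall fun n => ?_)
    exact (abs_integral_mul_le hpq (hg n) hhLq).trans
      (mul_le_mul (hnormtoReal n) le_rfl ENNReal.toReal_nonneg hC'0)
  have hfLp : MemLp f (ENNReal.ofReal p) μ :=
    memLp_of_dual_finite_range hpq hfmeas hfint hC'0 hpair
  -- convergence of the averages
  have hPavg : ∀ w : T, Tendsto (fun n => Pavg μ K (g n) w) (U : Filter ℕ)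
      (𝓝 (Pavg μ K f w)) := by
    intro w
    simp only [Pavg]
    rw [hfset _ (hKmeas w)]
    exact (hlam_tendsto (K w)).const_mul _
  -- energy bounds
  have henergyf : ∀ m : ℕ, 1 ≤ m → σ ^ m * energyF p K (Tm m) (Pavg μ K f) ≤ C₂ := by
    intro m hm
    have htendE : Tendsto (fun n => σ ^ m * energyF p K (Tm m) (Pavg μ K (g n)))
        (U : Filter ℕ) (𝓝 (σ ^ m * energyF p K (Tm m) (Pavg μ K f))) := by
      apply Tendsto.const_mul
      simp only [energyF]
      apply Tendsto.const_mul
      refine tendsto_finset_sum _ fun w _ => ?_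
      refine tendsto_finset_sum _ fun v _ => ?_
      by_cases hwv : (K w ∩ K v).Nonempty
      · simp only [if_pos hwv]
        exact (((hPavg w).sub (hPavg v)).abs).rpow_const (Or.inr hp0.le)
      · simp only [if_neg hwv]
        exact tendsto_const_nhds
    refine le_of_tendsto htendE ?_
    have hev : ∀ᶠ n in (U : Filter ℕ), m ≤ n := hUle (eventually_ge_atTop m)
    exact hev.mono fun n hn => henergy n m hm hn
  -- lower bound on the averages over K (wseq k)
  have hH : ∀ k : ℕ, (∑ j ∈ Finset.Icc 1 k, (j:ℝ)⁻¹) * (μ (K (wseq k))).toReal ≤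
      ∫ x in K (wseq k), f x ∂μ := by
    intro k
    rw [hfset _ (hKmeas _)]
    refine ge_of_tendsto (hlam_tendsto (K (wseq k))) ?_
    have hev : ∀ᶠ n in (U : Filter ℕ), (Mstar + 1) * k ≤ n :=
      hUle (eventually_ge_atTop _)
    refine hev.mono fun n hn => ?_
    have hae := hlower k n hn
    have h1 : ∫ x in K (wseq k), (∑ j ∈ Finset.Icc 1 k, (j:ℝ)⁻¹) ∂μ ≤
        ∫ x in K (wseq k), g n x ∂μ :=
      setIntegral_mono_ae_restrict (integrableOn_const (measure_lt_top μ _).ne)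
        (hgint n).integrableOn ((ae_restrict_iff' (hKmeas _)).mpr hae)
    rw [setIntegral_const, smul_eq_mul, mul_comm] at h1
    exact h1
  -- essential unboundedness
  have hunbdd : ¬ ∃ b : ℝ, ∀ᵐ x ∂μ, |f x| ≤ b := by
    rintro ⟨b, hb⟩
    have hble : ∀ k : ℕ, (∑ j ∈ Finset.Icc 1 k, (j:ℝ)⁻¹) ≤ b := by
      intro k
      have hμk : 0 < (μ (K (wseq k))).toReal :=
        ENNReal.toReal_pos (hμpos _).ne' (measure_ne_top μ _)
      have h2 : ∫ x in K (wseq k), f x ∂μ ≤ b * (μ (K (wseq k))).toReal := by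
        have h3 : ∫ x in K (wseq k), f x ∂μ ≤ ∫ x in K (wseq k), b ∂μ :=
          setIntegral_mono_ae_restrict hfint.integrableOn
            (integrableOn_const (measure_lt_top μ _).ne)
            (ae_restrict_of_ae (hb.mono fun x hx => (abs_le.mp hx).2))
        rwa [setIntegral_const, smul_eq_mul, mul_comm] at h3
      have h4 := (hH k).trans h2
      exact le_of_mul_le_mul_right h4 hμk
    have hdiv := Real.tendsto_sum_range_one_div_nat_succ_atTop
    obtain ⟨n, hn⟩ := (hdiv.eventually_gt_atTop b).exists
    have heq : ∀ m : ℕ, ∑ j ∈ Finset.Icc 1 m, (j:ℝ)⁻¹ = ∑ i ∈ Finset.range m, (1:ℝ)/(i+1) := by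
      intro m
      induction m with
      | zero => simp
      | succ m ih =>
        rw [Finset.sum_Icc_succ_top (by omega : 1 ≤ m + 1), ih, Finset.sum_range_succ, one_div]
        push_cast
        ring
    exact absurd (hble n) (not_le.mpr (by rw [heq n]; exact hn))
  -- no continuous representative
  have hnocont : ¬ ∃ h : X → ℝ, Continuous h ∧ f =ᵐ[μ] h := by
    rintro ⟨h, hc, haef⟩
    obtain ⟨b, hbd⟩ := isCompact_univ.exists_bound_of_continuousOn hc.continuousOn
    refine hunbdd ⟨b, haef.mono fun x hx => ?_⟩
    rw [hx]
    have hb2 := hbd x trivial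
    rwa [Real.norm_eq_abs] at hb2
  exact ⟨f, hfLp, henergyf, hunbdd, hnocont⟩
end
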